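/- arXiv:1408.0428 — 2 statements merged into one kernel-verified Lean document; each statement's English description precedes it below -/
import Mathlib

section
/- The complete graph K7 admits an embedding on the torus in which every face is a triangle; equivalently, there is a rotation system on K7 whose face-tracing yields 14 faces, so that V - E + F = 7 - 21 + 14 = 0. -/
/-- The setoid on a type given by "same cycle of the permutation `p`". -/
def sameCycleSetoid {D : Type*} (p : Equiv.Perm D) : Setoid D :=
  ⟨p.SameCycle, ⟨fun x => Equiv.Perm.SameCycle.refl p x,
    fun h => h.symm, fun h h' => h.trans h'⟩⟩

/-- The number of cycles (orbits, here: faces) of a permutation. -/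
noncomputable def numCycles {D : Type*} (p : Equiv.Perm D) : ℕ :=
  Nat.card (Quotient (sameCycleSetoid p))

/-- Darts of the complete graph `K7`: ordered pairs of distinct vertices. -/
abbrev K7Dart : Type := {p : Fin 7 × Fin 7 // p.1 ≠ p.2}

/-- The dart-reversal involution `(u, v) ↦ (v, u)`. -/
def k7rev : Equiv.Perm K7Dart where
  toFun d := ⟨(d.1.2, d.1.1), d.2.symm⟩
  invFun d := ⟨(d.1.2, d.1.1), d.2.symm⟩
  left_inv _ := rfl
  right_inv _ := rfl

/-- Cyclic successor on nonzero differences: `1 → 3 → 2 → 6 → 4 → 5 → 1`. -/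
def k7g : Fin 7 → Fin 7
  | 1 => 3 | 3 => 2 | 2 => 6 | 6 => 4 | 4 => 5 | 5 => 1 | 0 => 0

def k7ginv : Fin 7 → Fin 7
  | 3 => 1 | 2 => 3 | 6 => 2 | 4 => 6 | 5 => 4 | 1 => 5 | 0 => 0

lemma k7g_ne (u v : Fin 7) (h : u ≠ v) : u ≠ u + k7g (v - u) := by
  revert h; revert v; revert u; decide

lemma k7ginv_ne (u v : Fin 7) (h : u ≠ v) : u ≠ u + k7ginv (v - u) := by
  revert h; revert v; revert u; decide

/-- The rotation system on `K7`. -/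
def k7rot : Equiv.Perm K7Dart where
  toFun d := ⟨(d.1.1, d.1.1 + k7g (d.1.2 - d.1.1)), k7g_ne d.1.1 d.1.2 d.2⟩
  invFun d := ⟨(d.1.1, d.1.1 + k7ginv (d.1.2 - d.1.1)), k7ginv_ne d.1.1 d.1.2 d.2⟩
  left_inv := by decide
  right_inv := by decide

instance instFinSCS (p : Equiv.Perm K7Dart) : Fintype (Quotient (sameCycleSetoid p)) :=
  @Quotient.fintype _ _ (sameCycleSetoid p)
    (fun a b => (inferInstance : Decidable (p.SameCycle a b)))


/-- One representative dart for each of the 14 faces. -/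
def k7reps : List K7Dart :=
  [⟨(0,1), by decide⟩, ⟨(0,2), by decide⟩, ⟨(0,3), by decide⟩, ⟨(0,4), by decide⟩,
   ⟨(0,5), by decide⟩, ⟨(0,6), by decide⟩, ⟨(1,2), by decide⟩, ⟨(1,3), by decide⟩,
   ⟨(1,4), by decide⟩, ⟨(1,6), by decide⟩, ⟨(2,4), by decide⟩, ⟨(2,5), by decide⟩,
   ⟨(3,5), by decide⟩, ⟨(3,6), by decide⟩]

/-- If `f ^ 3 = 1` then same cycle means reachable in at most two steps. -/
lemma sameCycle_mem {D : Type*} [Finite D] (f : Equiv.Perm D) (hf3 : f ^ 3 = 1)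
    (d d' : D) (h : f.SameCycle d d') : d' = d ∨ d' = f d ∨ d' = f (f d) := by
  obtain ⟨n, -, hn⟩ := h.exists_pow_eq'
  have hmod : f ^ n = f ^ (n % 3) := by
    conv_lhs => rw [← Nat.div_add_mod n 3]
    rw [pow_add, pow_mul, hf3, one_pow, one_mul]
  have hlt : n % 3 < 3 := Nat.mod_lt n (by norm_num)
  rw [hmod] at hn
  interval_cases h : n % 3 <;> simp_all [pow_succ]

/-- **K7 triangulates the torus.**  There is a rotation system on `K7`
(a permutation `σ` of the darts preserving sources, whose cycles are exactly
the 7 vertex stars) whose face-tracing permutation `σ * k7rev` has all orbits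
of size 3 and exactly 14 orbits, so every face is a triangle and
`V - E + F = 7 - 21 + 14 = 0`, an embedding on the torus. -/

theorem K7_triangulates_torus :
    ∃ σ : Equiv.Perm K7Dart,
      (∀ d, (σ d).1.1 = d.1.1) ∧
      (∀ d d' : K7Dart, d.1.1 = d'.1.1 → σ.SameCycle d d') ∧
      (∀ d, (σ * k7rev) ((σ * k7rev) ((σ * k7rev) d)) = d ∧ (σ * k7rev) d ≠ d) ∧
      numCycles (σ * k7rev) = 14 ∧
      (7 : ℤ) - 21 + 14 = 0 := by
  refine ⟨k7rot, by decide, ?_, by decide, ?_, by norm_num⟩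
  · intro d d' h
    have : ∃ k : Fin 6, (k7rot ^ (k : ℕ)) d = d' := by revert h; revert d'; revert d; decide
    obtain ⟨k, hk⟩ := this
    exact ⟨(k : ℕ), hk⟩
  · set f := k7rot * k7rev with hf
    have h3 : ∀ d, f (f (f d)) = d := by decide
    have hne : ∀ d, f d ≠ d := by decide
    have hf3 : f ^ 3 = 1 := by
      ext d : 1
      simp only [pow_succ, pow_zero, one_mul, Equiv.Perm.mul_apply,
        Equiv.Perm.one_apply]
      exact h3 d
    have hsurj : ∀ d : K7Dart, ∃ r ∈ k7reps, d = r ∨ d = f r ∨ d = f (f r) := by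
      decide
    have hinj : ∀ r ∈ k7reps, ∀ r' ∈ k7reps,
        (r' = r ∨ r' = f r ∨ r' = f (f r)) → r = r' := by decide
    have hnd : k7reps.Nodup := by decide
    have hlen : k7reps.length = 14 := by decide
    have key : Nat.card (Quotient (sameCycleSetoid f)) = 14 := by
      have e : {x // x ∈ k7reps} ≃ Quotient (sameCycleSetoid f) := by
        refine Equiv.ofBijective (fun r => Quotient.mk _ r.1) ⟨?_, ?_⟩
        · rintro ⟨r, hr⟩ ⟨r', hr'⟩ hq
          have hsc : f.SameCycle r r' := Quotient.exact hq
          have := sameCycle_mem f hf3 r r' hsc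
          exact Subtype.ext (hinj r hr r' hr' this)
        · intro q
          induction q using Quotient.inductionOn with
          | h d =>
            obtain ⟨r, hr, hd⟩ := hsurj d
            refine ⟨⟨r, hr⟩, Quotient.sound ?_⟩
            rcases hd with h | h | h
            · exact h ▸ Equiv.Perm.SameCycle.refl f r
            · exact ⟨1, by simpa using h.symm⟩
            · exact ⟨2, by simpa [pow_succ] using h.symm⟩
      rw [← Nat.card_congr e, Nat.card_eq_fintype_card]
      decide
    exact key
end

section
/- The dual of a polyhedral map on the torus is again a polyhedral map on the torus, and a map is diminimal if and only if its dual is diminimal. -/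
/-- A combinatorial map: a finite set of darts, a vertex-rotation permutation `σ`
(whose cycles are the vertices with their cyclic order of incident darts), and a
fixed-point-free involution `α` pairing the two darts of each edge.
Faces are the cycles of `σ * α`. -/
structure TorusMap where
  D : Type
  [fin : Fintype D]
  σ : Equiv.Perm D
  α : Equiv.Perm D
  α_invol : ∀ d, α (α d) = d
  α_nofix : ∀ d, α d ≠ d

namespace TorusMap

variable (M : TorusMap)

instance : Fintype M.D := M.fin

/-- The face-tracing permutation. -/
def φ : Equiv.Perm M.D := M.σ * M.α

noncomputable def V : ℕ := numCycles M.σ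
noncomputable def E : ℕ := numCycles M.α
noncomputable def F : ℕ := numCycles M.φ

/-- The embedding lies on the torus: Euler characteristic `V - E + F = 0`. -/
def OnTorus : Prop := (M.V : ℤ) - M.E + M.F = 0

/-- Every vertex has degree at least 3. -/
def DegGe3 : Prop := ∀ d, M.σ d ≠ d ∧ M.σ (M.σ d) ≠ d

/-- Every face has at least 3 sides. -/
def FaceGe3 : Prop := ∀ d, M.φ d ≠ d ∧ M.φ (M.φ d) ≠ d

/-- No loops: the two darts of an edge lie at distinct vertices. -/
def NoLoop : Prop := ∀ d, ¬ M.σ.SameCycle d (M.α d)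

/-- No multiple edges: two edges joining the same pair of vertices coincide. -/
def NoMulti : Prop := ∀ d d', M.σ.SameCycle d d' → M.σ.SameCycle (M.α d) (M.α d') →
  (d' = d ∨ d' = M.α d)

/-- The underlying graph is simple. -/
def Simple : Prop := M.NoLoop ∧ M.NoMulti

/-- All faces are triangles. -/
def Triangular : Prop := ∀ d, M.φ (M.φ (M.φ d)) = d ∧ M.φ d ≠ d

/-- The boundary of each face is a simple closed curve (no repeated vertices). -/
def FaceSimple : Prop := ∀ x y, M.φ.SameCycle x y → M.σ.SameCycle x y → x = y

/-- No face traverses the same edge twice (the two sides of each edge lie on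
distinct faces). -/
def FaceNoRepeatEdge : Prop := ∀ x, ¬ M.φ.SameCycle x (M.α x)

/-- The set of darts of the face containing dart `d`. -/
def faceSet (d : M.D) : Set M.D := {x | M.φ.SameCycle d x}

/-- The vertex (a `σ`-cycle) at which a dart is based. -/
def vtxOf (d : M.D) : Quotient (sameCycleSetoid M.σ) := Quotient.mk _ d

/-- The edge (an `α`-orbit) carrying a dart. -/
def edgeOf (d : M.D) : Quotient (sameCycleSetoid M.α) := Quotient.mk _ d

/-- Vertices common to the faces of darts `d` and `d'`. -/
def sharedVerts (d d' : M.D) : Set (Quotient (sameCycleSetoid M.σ)) :=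
  (M.vtxOf '' M.faceSet d) ∩ (M.vtxOf '' M.faceSet d')

/-- Edges common to the faces of darts `d` and `d'`. -/
def sharedEdges (d d' : M.D) : Set (Quotient (sameCycleSetoid M.α)) :=
  (M.edgeOf '' M.faceSet d) ∩ (M.edgeOf '' M.faceSet d')

/-- Two faces meet properly: their intersection is empty, a single vertex, or a
single edge together with its two endpoints. -/
def MeetProperly (d d' : M.D) : Prop :=
  (M.sharedEdges d d' = ∅ ∧ (M.sharedVerts d d').Subsingleton) ∨
  (∃ e, e ∈ M.faceSet d ∧ M.sharedEdges d d' = {M.edgeOf e} ∧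
    M.sharedVerts d d' = {M.vtxOf e, M.vtxOf (M.α e)})

/-- A polyhedral map: simple graph, minimum degree 3, each face bounded by a
simple closed curve, and any two distinct faces meet properly. -/
def Polyhedral : Prop :=
  M.Simple ∧ M.DegGe3 ∧ M.FaceSimple ∧ M.FaceNoRepeatEdge ∧
    ∀ d d', ¬ M.φ.SameCycle d d' → M.MeetProperly d d'

/-- A toroidal polyhedral map (TPM). -/
def IsTPM : Prop := Nonempty M.D ∧ M.OnTorus ∧ M.Polyhedral

/-- The dual map: vertices and faces are exchanged. -/
def dual : TorusMap := ⟨M.D, M.φ, M.α, M.α_invol, M.α_nofix⟩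

end TorusMap

section Skip
variable {D : Type*} [Fintype D] (p : Equiv.Perm D) (S : Set D)

lemma skip_ex (x : {y : D // y ∉ S}) : ∃ n, 0 < n ∧ p^[n] x.1 ∉ S := by
  refine ⟨orderOf p, orderOf_pos p, ?_⟩
  have h : p ^ orderOf p = 1 := pow_orderOf_eq_one p
  have : p^[orderOf p] x.1 = (p ^ orderOf p) x.1 := by
    rw [← Equiv.Perm.iterate_eq_pow]
  rw [this, h]
  exact x.2

open Classical in
/-- First-return map of the permutation `p` on the complement of `S`. -/
noncomputable def skipFun (x : {y : D // y ∉ S}) : {y : D // y ∉ S} :=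
  ⟨p^[Nat.find (skip_ex p S x)] x.1, (Nat.find_spec (skip_ex p S x)).2⟩

open Classical in
lemma skipFun_inj : Function.Injective (skipFun p S) := by
  classical
  have key : ∀ x y : {y : D // y ∉ S},
      Nat.find (skip_ex p S x) ≤ Nat.find (skip_ex p S y) →
      skipFun p S x = skipFun p S y → x = y := by
    intro x y hmn h
    set m := Nat.find (skip_ex p S x) with hm
    set n := Nat.find (skip_ex p S y) with hn
    have hiter : p^[m] x.1 = p^[n] y.1 := congrArg Subtype.val h
    have hx : x.1 = p^[n - m] y.1 := by
      have : p^[m] x.1 = p^[m] (p^[n - m] y.1) := by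
        rw [← Function.iterate_add_apply, Nat.add_sub_cancel' hmn, hiter]
      exact (p.injective.iterate m) this
    rcases Nat.eq_zero_or_pos (n - m) with h0 | hpos
    · ext
      simp [hx, h0]
    · exfalso
      have hlt : n - m < n := by
        have hm0 : 0 < m := (Nat.find_spec (skip_ex p S x)).1
        omega
      have := Nat.find_min (skip_ex p S y) hlt
      exact this ⟨hpos, by rw [← hx]; exact x.2⟩
  intro x y h
  rcases le_total (Nat.find (skip_ex p S x)) (Nat.find (skip_ex p S y)) with hle | hle
  · exact key x y hle h
  · exact (key y x hle h.symm).symm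

/-- The permutation induced by `p` on the complement of `S` by skipping over `S`. -/
noncomputable def skipPerm : Equiv.Perm {y : D // y ∉ S} :=
  Equiv.ofBijective _ ((Finite.injective_iff_bijective).mp (skipFun_inj p S))

end Skip

namespace TorusMap

lemma alpha_mem (M : TorusMap) (d x : M.D) :
    x ∉ ({d, M.α d} : Set M.D) ↔ M.α x ∉ ({d, M.α d} : Set M.D) := by
  simp only [Set.mem_insert_iff, Set.mem_singleton_iff]
  constructor
  · rintro h h'
    rcases h' with h' | h'
    · exact h (Or.inr (by rw [← h', M.α_invol]))
    · exact h (Or.inl (M.α.injective h'))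
  · rintro h h'
    rcases h' with h' | h'
    · exact h (Or.inr (by rw [h']))
    · exact h (Or.inl (by rw [h', M.α_invol]))

/-- Deletion of the edge carried by the dart `d`: both darts of the edge are
removed, and the rotations at its endpoints skip over them. -/
noncomputable def deleteEdge (M : TorusMap) (d : M.D) : TorusMap where
  D := {x : M.D // x ∉ ({d, M.α d} : Set M.D)}
  fin := Fintype.ofFinite _
  σ := skipPerm M.σ _
  α := M.α.subtypePerm (fun x => (M.alpha_mem d x).symm)
  α_invol := fun x => Subtype.ext (by
    simpa [Equiv.Perm.subtypePerm_apply] using M.α_invol x.1)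
  α_nofix := fun x h => M.α_nofix x.1 (congrArg Subtype.val h)

/-- Contraction of the edge carried by the dart `d` (dual to deletion). -/
noncomputable def contractEdge (M : TorusMap) (d : M.D) : TorusMap :=
  (M.dual.deleteEdge d).dual

/-- `x` is a dart at a vertex of degree exactly 2. -/
def Deg2 (M : TorusMap) (x : M.D) : Prop := M.σ x ≠ x ∧ M.σ (M.σ x) = x

/-- `x` is a dart of a 2-sided face. -/
def Face2 (M : TorusMap) (x : M.D) : Prop := M.φ x ≠ x ∧ M.φ (M.φ x) = x

/-- `CoalesceOf N N'` holds when `N'` is obtained from `N` by repeatedly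
coalescing the two edges at a degree-2 vertex (i.e. contracting one of them)
until no degree-2 vertex remains. -/
inductive CoalesceOf : TorusMap → TorusMap → Prop
  | refl (N : TorusMap) (h : ∀ x : N.D, ¬ N.Deg2 x) : CoalesceOf N N
  | step (N N' : TorusMap) (x : N.D) (hx : N.Deg2 x)
      (h : CoalesceOf (N.contractEdge x) N') : CoalesceOf N N'

/-- `SimplifyOf N N'` holds when `N'` is obtained from `N` by repeatedly
replacing the two edges of a 2-sided face by a single edge (i.e. deleting one
of them) until no 2-sided face remains. -/
inductive SimplifyOf : TorusMap → TorusMap → Prop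
  | refl (N : TorusMap) (h : ∀ x : N.D, ¬ N.Face2 x) : SimplifyOf N N
  | step (N N' : TorusMap) (x : N.D) (hx : N.Face2 x)
      (h : SimplifyOf (N.deleteEdge x) N') : SimplifyOf N N'

/-- An edge is removable if removing it (and coalescing the edges at any
resulting degree-2 vertex) again yields a toroidal polyhedral map. -/
def Removable (M : TorusMap) (d : M.D) : Prop :=
  ∃ N, CoalesceOf (M.deleteEdge d) N ∧ N.IsTPM

/-- An edge is shrinkable if contracting it (and replacing any resulting
2-sided face by a single edge) again yields a toroidal polyhedral map. -/
def Shrinkable (M : TorusMap) (d : M.D) : Prop :=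
  ∃ N, SimplifyOf (M.contractEdge d) N ∧ N.IsTPM

/-- A toroidal polyhedral map is diminimal if it has no removable and no
shrinkable edges. -/
def Diminimal (M : TorusMap) : Prop :=
  M.IsTPM ∧ ∀ d : M.D, ¬ M.Removable d ∧ ¬ M.Shrinkable d

end TorusMap

/-!
Dualising replaces `σ` by `φ = σ * α` and keeps `α`; since `φ * α = σ`, vertices and faces
trade places while edges stay put. The conditions defining a polyhedral map are then exchanged
in pairs (loops and edges repeated on a face boundary, degree and face size, …), and the one
that needs an argument is that two vertices of `M` meet properly as faces of the dual: if two
distinct faces of `M` both pass through two distinct vertices, meeting properly forces them to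
share an edge joining those vertices, so the vertices are either joined by no edge and share at
most one face, or joined by exactly one edge (no multiple edges) and share exactly the two faces
along it. Deletion in the dual is contraction, and a degree-2 vertex of the dual is a 2-gon of
`M`, so removable and shrinkable edges are exchanged.
-/

namespace Equiv.Perm

variable {D : Type*}

theorem sameCycle_iff_of_involutive {p : Perm D} (hp : Function.Involutive p) {x y : D} :
    p.SameCycle x y ↔ y = x ∨ y = p x := by
  have hp2 : p ^ (2 : ℤ) = 1 := Equiv.ext hp
  constructor
  · rintro ⟨n, rfl⟩
    rcases Int.even_or_odd' n with ⟨k, rfl | rfl⟩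
    · left
      rw [zpow_mul, hp2, one_zpow, one_apply]
    · right
      rw [zpow_add, zpow_mul, hp2, one_zpow, one_mul, zpow_one]
  · rintro (rfl | rfl)
    exacts [SameCycle.rfl, sameCycle_apply_right.mpr SameCycle.rfl]

theorem sameCycle_self_apply (p : Perm D) (x : D) : p.SameCycle x (p x) :=
  sameCycle_apply_right.mpr .rfl

end Equiv.Perm

namespace TorusMap

variable (M : TorusMap)

theorem dual_phi : M.dual.φ = M.σ := by
  ext d
  exact congrArg M.σ (M.α_invol d)

theorem dual_dual : M.dual.dual = M := by
  obtain ⟨D, σ, α, hα, hα'⟩ := M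
  have hσ : σ * α * α = σ := Equiv.ext fun d => congrArg σ (hα d)
  simp only [dual, φ]
  congr

variable {M}

theorem vtxOf_eq_iff {x y : M.D} : M.vtxOf x = M.vtxOf y ↔ M.σ.SameCycle x y := Quotient.eq

theorem dual_vtxOf_eq_iff {x y : M.D} : M.dual.vtxOf x = M.dual.vtxOf y ↔ M.φ.SameCycle x y :=
  vtxOf_eq_iff

theorem edgeOf_eq_iff {x y : M.D} : M.edgeOf x = M.edgeOf y ↔ y = x ∨ y = M.α x :=
  Quotient.eq.trans (Equiv.Perm.sameCycle_iff_of_involutive M.α_invol)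

theorem edgeOf_alpha (e : M.D) : M.edgeOf (M.α e) = M.edgeOf e :=
  edgeOf_eq_iff.mpr (Or.inr (M.α_invol e).symm)

theorem phi_alpha (e : M.D) : M.φ (M.α e) = M.σ e := congrArg M.σ (M.α_invol e)

theorem dual_faceSet (d : M.D) : M.dual.faceSet d = {x | M.σ.SameCycle d x} := by
  simp only [faceSet, dual_phi]
  rfl

theorem faceGe3_of_simple (hs : M.Simple) (hr : M.FaceNoRepeatEdge) : M.FaceGe3 := by
  obtain ⟨hnl, hnm⟩ := hs
  have hσα : ∀ x, M.σ.SameCycle (M.α x) (M.φ x) := fun x => M.σ.sameCycle_self_apply (M.α x)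
  have hφ : ∀ d, M.φ d ≠ d := fun d h => hnl d (h ▸ hσα d).symm
  refine fun d => ⟨hφ d, fun h => ?_⟩
  have hde : M.σ.SameCycle d (M.α (M.φ d)) := (h ▸ hσα (M.φ d)).symm
  have hed : M.σ.SameCycle (M.α d) (M.α (M.α (M.φ d))) := M.α_invol _ ▸ hσα d
  rcases hnm d _ hde hed with h' | h'
  · exact hr d ⟨1, by rw [zpow_one, ← M.α_invol (M.φ d), h']⟩
  · exact hφ d (M.α.injective h')

theorem MeetProperly.sharedEdges_subsingleton {d d' : M.D} (h : M.MeetProperly d d') :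
    (M.sharedEdges d d').Subsingleton := by
  rcases h with ⟨hE, -⟩ | ⟨e, -, hE, -⟩ <;> rw [hE]
  exacts [Set.subsingleton_empty, Set.subsingleton_singleton]

theorem MeetProperly.exists_of_sharedVerts_nontrivial {d d' : M.D} (h : M.MeetProperly d d')
    (hV : (M.sharedVerts d d').Nontrivial) :
    ∃ e ∈ M.faceSet d, M.sharedVerts d d' = {M.vtxOf e, M.vtxOf (M.α e)} := by
  rcases h with ⟨-, hV'⟩ | ⟨e, he, -, hV'⟩
  · exact absurd hV' hV.not_subsingleton
  · exact ⟨e, he, hV'⟩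

theorem dual_noMulti (hr : M.FaceNoRepeatEdge)
    (hmeet : ∀ d d', ¬ M.φ.SameCycle d d' → M.MeetProperly d d') : M.dual.NoMulti := by
  intro x y hxy hαxy
  have hx : M.edgeOf x ∈ M.sharedEdges x (M.α x) :=
    ⟨⟨x, .rfl, rfl⟩, ⟨M.α x, .rfl, M.edgeOf_alpha x⟩⟩
  have hy : M.edgeOf y ∈ M.sharedEdges x (M.α x) :=
    ⟨⟨y, hxy, rfl⟩, ⟨M.α y, hαxy, M.edgeOf_alpha y⟩⟩
  exact edgeOf_eq_iff.mp ((hmeet x (M.α x) (hr x)).sharedEdges_subsingleton hx hy)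

theorem mem_dual_sharedEdges {v v' : M.D} (hvv' : ¬ M.σ.SameCycle v v')
    {E : Quotient (sameCycleSetoid M.dual.α)} :
    E ∈ M.dual.sharedEdges v v' ↔
      ∃ e, M.σ.SameCycle v e ∧ M.σ.SameCycle v' (M.α e) ∧ E = M.edgeOf e := by
  simp only [sharedEdges, dual_faceSet]
  constructor
  · rintro ⟨⟨x, hx, rfl⟩, ⟨y, hy, hyx⟩⟩
    rcases edgeOf_eq_iff.mp hyx with h | h
    · exact absurd (hx.trans (h ▸ hy).symm) hvv'
    · exact ⟨x, hx, by rw [h]; exact (M.α_invol y).symm ▸ hy, rfl⟩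
  · rintro ⟨e, he, he', rfl⟩
    exact ⟨⟨e, he, rfl⟩, ⟨M.α e, he', M.edgeOf_alpha e⟩⟩

theorem mem_dual_sharedVerts {v v' : M.D} {F : Quotient (sameCycleSetoid M.dual.σ)} :
    F ∈ M.dual.sharedVerts v v' ↔ ∃ x y, M.σ.SameCycle v x ∧ M.σ.SameCycle v' y ∧
      M.φ.SameCycle x y ∧ F = M.dual.vtxOf x := by
  simp only [sharedVerts, dual_faceSet]
  constructor
  · rintro ⟨⟨x, hx, rfl⟩, ⟨y, hy, hyx⟩⟩
    exact ⟨x, y, hx, hy, (vtxOf_eq_iff.mp hyx).symm, rfl⟩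
  · rintro ⟨x, y, hx, hy, hxy, rfl⟩
    exact ⟨⟨x, hx, rfl⟩, ⟨y, hy, (vtxOf_eq_iff.mpr hxy).symm⟩⟩

theorem dual_sharedEdges_subsingleton (hnm : M.NoMulti) {v v' : M.D}
    (hvv' : ¬ M.σ.SameCycle v v') : (M.dual.sharedEdges v v').Subsingleton := by
  rintro _ hE _ hE'
  obtain ⟨e, he, he', rfl⟩ := (mem_dual_sharedEdges hvv').mp hE
  obtain ⟨f, hf, hf', rfl⟩ := (mem_dual_sharedEdges hvv').mp hE'
  rcases hnm e f (he.symm.trans hf) (he'.symm.trans hf') with rfl | rfl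
  · rfl
  · exact absurd (hf.trans he'.symm) hvv'

theorem exists_joining_edge_in_face
    (hmeet : ∀ d d', ¬ M.φ.SameCycle d d' → M.MeetProperly d d')
    {v v' x y x' y' : M.D} (hvv' : ¬ M.σ.SameCycle v v')
    (hx : M.σ.SameCycle v x) (hy : M.σ.SameCycle v' y) (hxy : M.φ.SameCycle x y)
    (hx' : M.σ.SameCycle v x') (hy' : M.σ.SameCycle v' y') (hxy' : M.φ.SameCycle x' y')
    (hxx' : ¬ M.φ.SameCycle x x') :
    ∃ e, M.φ.SameCycle x e ∧ M.edgeOf e ∈ M.dual.sharedEdges v v' := by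
  have hv : M.vtxOf v ∈ M.sharedVerts x x' :=
    ⟨⟨x, .rfl, vtxOf_eq_iff.mpr hx.symm⟩, ⟨x', .rfl, vtxOf_eq_iff.mpr hx'.symm⟩⟩
  have hv' : M.vtxOf v' ∈ M.sharedVerts x x' :=
    ⟨⟨y, hxy, vtxOf_eq_iff.mpr hy.symm⟩, ⟨y', hxy', vtxOf_eq_iff.mpr hy'.symm⟩⟩
  obtain ⟨e, he, hV⟩ := (hmeet x x' hxx').exists_of_sharedVerts_nontrivial
    ⟨_, hv, _, hv', mt vtxOf_eq_iff.mp hvv'⟩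
  rw [hV] at hv hv'
  simp only [Set.mem_insert_iff, Set.mem_singleton_iff, vtxOf_eq_iff] at hv hv'
  refine ⟨e, he, (mem_dual_sharedEdges hvv').mpr ?_⟩
  rcases hv with hv | hv <;> rcases hv' with hv' | hv'
  · exact absurd (hv.trans hv'.symm) hvv'
  · exact ⟨e, hv, hv', rfl⟩
  · exact ⟨M.α e, hv, by rwa [M.α_invol], (M.edgeOf_alpha e).symm⟩
  · exact absurd (hv.trans hv'.symm) hvv'

theorem dual_sharedVerts_subsingleton
    (hmeet : ∀ d d', ¬ M.φ.SameCycle d d' → M.MeetProperly d d')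
    {v v' : M.D} (hvv' : ¬ M.σ.SameCycle v v') (hE : M.dual.sharedEdges v v' = ∅) :
    (M.dual.sharedVerts v v').Subsingleton := by
  rintro _ hF _ hF'
  obtain ⟨x, y, hx, hy, hxy, rfl⟩ := mem_dual_sharedVerts.mp hF
  obtain ⟨x', y', hx', hy', hxy', rfl⟩ := mem_dual_sharedVerts.mp hF'
  by_contra hne
  obtain ⟨e, -, he⟩ :=
    exists_joining_edge_in_face hmeet hvv' hx hy hxy hx' hy' hxy' (mt dual_vtxOf_eq_iff.mpr hne)
  rw [hE] at he
  exact he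

theorem dual_sharedVerts_eq_pair (hnm : M.NoMulti)
    (hmeet : ∀ d d', ¬ M.φ.SameCycle d d' → M.MeetProperly d d')
    {v v' e : M.D} (hvv' : ¬ M.σ.SameCycle v v')
    (he : M.σ.SameCycle v e) (he' : M.σ.SameCycle v' (M.α e)) :
    M.dual.sharedVerts v v' = {M.dual.vtxOf e, M.dual.vtxOf (M.α e)} := by
  have hφe : M.σ.SameCycle v' (M.φ e) := he'.trans (M.σ.sameCycle_self_apply _)
  ext F
  simp only [mem_dual_sharedVerts, Set.mem_insert_iff, Set.mem_singleton_iff]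
  constructor
  · rintro ⟨x, y, hx, hy, hxy, rfl⟩
    by_contra! hne
    obtain ⟨f, hxf, hf⟩ := exists_joining_edge_in_face hmeet hvv' hx hy hxy he hφe
      (M.φ.sameCycle_self_apply e) (mt dual_vtxOf_eq_iff.mpr hne.1)
    have hfe := dual_sharedEdges_subsingleton hnm hvv' hf
      ((mem_dual_sharedEdges hvv').mpr ⟨e, he, he', rfl⟩)
    rcases edgeOf_eq_iff.mp hfe.symm with rfl | rfl
    · exact hne.1 (dual_vtxOf_eq_iff.mpr hxf)
    · exact hne.2 (dual_vtxOf_eq_iff.mpr hxf)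
  · rintro (rfl | rfl)
    · exact ⟨e, M.φ e, he, hφe, M.φ.sameCycle_self_apply e, rfl⟩
    · have hαe : M.φ.SameCycle (M.α e) (M.σ e) := M.phi_alpha e ▸ M.φ.sameCycle_self_apply _
      exact ⟨M.σ e, M.α e, he.trans (M.σ.sameCycle_self_apply e), he', hαe.symm,
        dual_vtxOf_eq_iff.mpr hαe⟩

theorem dual_meetProperly (hnm : M.NoMulti)
    (hmeet : ∀ d d', ¬ M.φ.SameCycle d d' → M.MeetProperly d d')
    {v v' : M.D} (hvv' : ¬ M.σ.SameCycle v v') : M.dual.MeetProperly v v' := by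
  rcases (M.dual.sharedEdges v v').eq_empty_or_nonempty with hE | ⟨E, hE⟩
  · exact Or.inl ⟨hE, dual_sharedVerts_subsingleton hmeet hvv' hE⟩
  · obtain ⟨e, he, he', rfl⟩ := (mem_dual_sharedEdges hvv').mp hE
    refine Or.inr ⟨e, M.dual_faceSet v ▸ he, ?_, dual_sharedVerts_eq_pair hnm hmeet hvv' he he'⟩
    exact (dual_sharedEdges_subsingleton hnm hvv').eq_singleton_of_mem hE

theorem Polyhedral.dual (hP : M.Polyhedral) : M.dual.Polyhedral := by
  obtain ⟨⟨hnl, hnm⟩, -, hfs, hr, hmeet⟩ := hP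
  refine ⟨⟨hr, dual_noMulti hr hmeet⟩, faceGe3_of_simple ⟨hnl, hnm⟩ hr, ?_, ?_, ?_⟩
  · intro x y hσ hφ
    rw [dual_phi] at hσ
    exact hfs x y hφ hσ
  · intro x hσ
    rw [dual_phi] at hσ
    exact hnl x hσ
  · intro v v' hvv'
    rw [dual_phi] at hvv'
    exact dual_meetProperly hnm hmeet hvv'

theorem OnTorus.dual (h : M.OnTorus) : M.dual.OnTorus := by
  have hV : M.dual.V = M.F := rfl
  have hE : M.dual.E = M.E := rfl
  have hF : M.dual.F = M.V := congrArg numCycles M.dual_phi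
  unfold OnTorus at h ⊢
  rw [hV, hE, hF]
  linarith

theorem IsTPM.dual (h : M.IsTPM) : M.dual.IsTPM :=
  ⟨h.1, h.2.1.dual, h.2.2.dual⟩

-- Not a rewrite by `dual_dual`: the type of `d` depends on the map.
theorem dual_dual_deleteEdge (d : M.D) : M.dual.dual.deleteEdge d = M.deleteEdge d := by
  obtain ⟨D, σ, α, hα, hα'⟩ := M
  have hσ : σ * α * α = σ := Equiv.ext fun d => congrArg σ (hα d)
  simp only [dual, φ]
  congr

theorem dual_contractEdge (d : M.D) : M.dual.contractEdge d = (M.deleteEdge d).dual :=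
  congrArg TorusMap.dual (dual_dual_deleteEdge d)

theorem contractEdge_dual (d : M.D) : (M.contractEdge d).dual = M.dual.deleteEdge d :=
  dual_dual _

theorem dual_face2_iff {x : M.D} : M.dual.Face2 x ↔ M.Deg2 x := by
  unfold Face2 Deg2
  rw [dual_phi]
  rfl

theorem dual_deg2_iff {x : M.D} : M.dual.Deg2 x ↔ M.Face2 x := Iff.rfl

theorem CoalesceOf.dual {K N : TorusMap} (h : CoalesceOf K N) : SimplifyOf K.dual N.dual := by
  induction h with
  | refl N h => exact .refl N.dual fun x hx => h x (dual_face2_iff.mp hx)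
  | step N N' x hx _ ih =>
    exact .step N.dual N'.dual x (dual_face2_iff.mpr hx) (contractEdge_dual x ▸ ih)

theorem SimplifyOf.dual {K N : TorusMap} (h : SimplifyOf K N) : CoalesceOf K.dual N.dual := by
  induction h with
  | refl N h => exact .refl N.dual fun x hx => h x (dual_deg2_iff.mp hx)
  | step N N' x hx _ ih =>
    exact .step N.dual N'.dual x (dual_deg2_iff.mpr hx) (dual_contractEdge x ▸ ih)

theorem shrinkable_of_dual_removable {d : M.D} (h : M.dual.Removable d) : M.Shrinkable d :=
  let ⟨N, hN, hT⟩ := h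
  ⟨N.dual, hN.dual, hT.dual⟩

theorem removable_of_dual_shrinkable {d : M.D} (h : M.dual.Shrinkable d) : M.Removable d := by
  obtain ⟨N, hN, hT⟩ := h
  rw [dual_contractEdge] at hN
  exact ⟨N.dual, M.deleteEdge d |>.dual_dual ▸ hN.dual, hT.dual⟩

theorem Diminimal.dual (h : M.Diminimal) : M.dual.Diminimal :=
  ⟨h.1.dual, fun d => ⟨mt shrinkable_of_dual_removable (h.2 d).2,
    mt removable_of_dual_shrinkable (h.2 d).1⟩⟩

end TorusMap

/-- **Duality for toroidal polyhedral maps.**  The dual of a toroidal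
polyhedral map is again a toroidal polyhedral map, and a map is diminimal if
and only if its dual is diminimal. -/
theorem dual_TPM_and_diminimal_iff (M : TorusMap) (h : M.IsTPM) :
    M.dual.IsTPM ∧ (M.Diminimal ↔ M.dual.Diminimal) :=
  ⟨h.dual, ⟨TorusMap.Diminimal.dual, fun hd => M.dual_dual ▸ hd.dual⟩⟩
end
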